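/- arXiv:1412.3945 — 2 statements merged into one kernel-verified Lean document; each statement's English description precedes it below -/
import Mathlib

section
/- Let a, c ≥ 1 and b ≥ 0 be integers and let j, k be integers with 1 ≤ j ≤ a and 1 ≤ k ≤ c. Then the region obtained from the hexagon H_{a,b,c} by removing two dents of opposite orientation in position j along a side of length a and position k along the adjacent side of length c (positions counted from the common vertex of the two sides) admits at least one lozenge tiling; that is, its number of lozenge tilings is positive. -/
/-- A unit triangle of the triangular lattice, encoded as `(x, y, ε)` where
`ε = true` means up-pointing and `ε = false` means down-pointing. -/
abbrev Tri : Type := ℤ × ℤ × Bool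

/-- Two unit triangles are adjacent (i.e. together they form a lozenge) iff one of them is
the up-triangle at `(x,y)` and the other is one of the down-triangles at
`(x,y)`, `(x-1,y)`, `(x,y-1)`. -/
def Adj (s t : Tri) : Prop :=
  ∃ x y : ℤ,
    ({s, t} : Set Tri) = {(x, y, true), (x, y, false)} ∨
    ({s, t} : Set Tri) = {(x, y, true), (x - 1, y, false)} ∨
    ({s, t} : Set Tri) = {(x, y, true), (x, y - 1, false)}

/-- `P` is a lozenge tiling of the region `R`: a partition of `R` into pairs of
adjacent unit triangles. -/
def IsLozengeTiling (R : Set Tri) (P : Set (Set Tri)) : Prop :=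
  (∀ L ∈ P, ∃ s t : Tri, Adj s t ∧ L = {s, t}) ∧
  (∀ L ∈ P, L ⊆ R) ∧
  (∀ r ∈ R, ∃! L, L ∈ P ∧ r ∈ L)

/-- The number of lozenge tilings of the region `R`. -/
noncomputable def M (R : Set Tri) : ℕ :=
  Nat.card {P : Set (Set Tri) // IsLozengeTiling R P}

/-- The hexagonal region `H^k_{a,b,c}` on the triangular lattice, whose side lengths in
clockwise order starting from the top side are `a, b+k, c, a+k, b, c+k`.
(Concretely: the unit triangles all of whose vertices `(x,y)` satisfy
`0 ≤ x ≤ a+b+k`, `0 ≤ y ≤ b+c+k`, `b ≤ x+y ≤ a+b+c+k`.) -/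
def HexK (a b c k : ℕ) : Set Tri :=
  {t | 0 ≤ t.1 ∧ t.1 ≤ (a : ℤ) + b + k - 1 ∧ 0 ≤ t.2.1 ∧ t.2.1 ≤ (b : ℤ) + c + k - 1 ∧
    (if t.2.2 then (b : ℤ) ≤ t.1 + t.2.1 ∧ t.1 + t.2.1 ≤ (a : ℤ) + b + c + k - 1
     else (b : ℤ) - 1 ≤ t.1 + t.2.1 ∧ t.1 + t.2.1 ≤ (a : ℤ) + b + c + k - 2)}

/-- The hexagonal region `H_{a,b,c}` whose side lengths in clockwise order starting from
the top side are `a, b, c, a, b, c`. -/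
def Hex (a b c : ℕ) : Set Tri := HexK a b c 0

/-! ### Auxiliary material for the proof -/

/-- The dented hexagonal region of the theorem. -/
def Reg (a b c j k : ℕ) : Set Tri :=
  Hex a b c \ {((a : ℤ) + b - j, 0, true), ((a : ℤ) + b - 1, (k : ℤ) - 1, false)}

lemma mem_up (a b c j k : ℕ) (x y : ℤ) :
    ((x, y, true) : Tri) ∈ Reg a b c j k ↔
      0 ≤ x ∧ x ≤ (a : ℤ) + b - 1 ∧ 0 ≤ y ∧ y ≤ (b : ℤ) + c - 1 ∧
      (b : ℤ) ≤ x + y ∧ x + y ≤ (a : ℤ) + b + c - 1 ∧ ¬(x = (a : ℤ) + b - j ∧ y = 0) := by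
  simp [Reg, Hex, HexK, Set.mem_diff, Prod.ext_iff]
  tauto

lemma mem_down (a b c j k : ℕ) (x y : ℤ) :
    ((x, y, false) : Tri) ∈ Reg a b c j k ↔
      0 ≤ x ∧ x ≤ (a : ℤ) + b - 1 ∧ 0 ≤ y ∧ y ≤ (b : ℤ) + c - 1 ∧
      (b : ℤ) - 1 ≤ x + y ∧ x + y ≤ (a : ℤ) + b + c - 2 ∧
      ¬(x = (a : ℤ) + b - 1 ∧ y = (k : ℤ) - 1) := by
  simp [Reg, Hex, HexK, Set.mem_diff, Prod.ext_iff]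
  tauto

/-- The partner function defining an explicit tiling of the dented hexagon.
Here `p = a+b-j`, `q = a+b-1`, `r = k-1`.  The corner `a × c` parallelogram
(cells `b ≤ x ≤ a+b-1`, `0 ≤ y ≤ c-1`) is tiled by "cell" lozenges, except along a
zigzag path joining the two dents; the remaining part of the hexagon splits into a
`b × c` and an `a × b` parallelogram, each tiled by one type of lozenge. -/
def pairFn (B C p q r : ℤ) : Tri → Tri := fun t =>
  match t with
  | (x, y, true) =>
    if B ≤ x ∧ y ≤ C - 1 then
      if y = 0 ∧ p + 1 ≤ x then (x - 1, 0, false)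
      else if x = q ∧ 1 ≤ y ∧ y ≤ r then (q, y - 1, false)
      else (x, y, false)
    else if x ≤ B - 1 ∧ x + y ≤ B + C - 1 then (x, y - 1, false)
    else (x - 1, y, false)
  | (x, y, false) =>
    if B ≤ x ∧ y ≤ C - 1 then
      if y = 0 ∧ p ≤ x ∧ x ≤ q - 1 then (x + 1, 0, true)
      else if x = q ∧ y ≤ r - 1 then (q, y + 1, true)
      else (x, y, true)
    else if x ≤ B - 1 ∧ x + y ≤ B + C - 2 then (x, y + 1, true)
    else (x + 1, y, true)

lemma adj_cases (x y x' y' : ℤ)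
    (h : (x' = x ∧ y' = y) ∨ (x' = x - 1 ∧ y' = y) ∨ (x' = x ∧ y' = y - 1)) :
    Adj (x, y, true) (x', y', false) := by
  obtain ⟨rfl, rfl⟩ | ⟨rfl, rfl⟩ | ⟨rfl, rfl⟩ := h
  · exact ⟨_, _, Or.inl rfl⟩
  · exact ⟨_, _, Or.inr (Or.inl rfl)⟩
  · exact ⟨_, _, Or.inr (Or.inr rfl)⟩

lemma Adj.symm' {s t : Tri} (h : Adj s t) : Adj t s := by
  obtain ⟨x, y, h⟩ := h
  exact ⟨x, y, by rwa [Set.pair_comm]⟩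

/-- The key properties of the partner function on the dented hexagon: it maps the region
to itself, is an involution, and always pairs adjacent triangles. -/
lemma key (a b c j k : ℕ) (ha : 1 ≤ a) (hc : 1 ≤ c) (hj1 : 1 ≤ j) (hj2 : j ≤ a)
    (hk1 : 1 ≤ k) (hk2 : k ≤ c) :
    ∀ t ∈ Reg a b c j k,
      pairFn b c ((a : ℤ) + b - j) ((a : ℤ) + b - 1) ((k : ℤ) - 1) t ∈ Reg a b c j k ∧
      pairFn b c ((a : ℤ) + b - j) ((a : ℤ) + b - 1) ((k : ℤ) - 1)
        (pairFn b c ((a : ℤ) + b - j) ((a : ℤ) + b - 1) ((k : ℤ) - 1) t) = t ∧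
      Adj t (pairFn b c ((a : ℤ) + b - j) ((a : ℤ) + b - 1) ((k : ℤ) - 1) t) := by
  rintro ⟨x, y, ε⟩ ht
  cases ε
  case true =>
    rw [mem_up] at ht
    refine ⟨?_, ?_, ?_⟩
    · simp only [pairFn]
      split_ifs <;> rw [mem_down] <;> omega
    · simp only [pairFn]
      split_ifs <;> dsimp only <;> split_ifs <;>
        (first | rfl | (simp only [Prod.mk.injEq, and_true, true_and]; first | trivial | omega))
    · simp only [pairFn]
      split_ifs <;> exact adj_cases _ _ _ _ (by omega)
  case false =>
    rw [mem_down] at ht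
    refine ⟨?_, ?_, ?_⟩
    · simp only [pairFn]
      split_ifs <;> rw [mem_up] <;> omega
    · simp only [pairFn]
      split_ifs <;> dsimp only <;> split_ifs <;>
        (first | rfl | (simp only [Prod.mk.injEq, and_true, true_and]; first | trivial | omega))
    · simp only [pairFn]
      split_ifs <;> exact Adj.symm' (adj_cases _ _ _ _ (by omega))

lemma reg_finite (a b c j k : ℕ) : (Reg a b c j k).Finite := by
  apply Set.Finite.subset (Set.Finite.prod (Set.finite_Icc (0:ℤ) ((a:ℤ)+b))
    (Set.Finite.prod (Set.finite_Icc (0:ℤ) ((b:ℤ)+c)) (Set.finite_univ (α := Bool))))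
  rintro ⟨x, y, ε⟩ ⟨hx, -⟩
  simp only [Hex, HexK, Set.mem_setOf_eq] at hx
  cases ε <;>
    simp only [Set.mem_prod, Set.mem_Icc, Set.mem_univ, and_true] at * <;>
    omega

lemma tiling_exists (a b c j k : ℕ) (ha : 1 ≤ a) (hc : 1 ≤ c) (hj1 : 1 ≤ j) (hj2 : j ≤ a)
    (hk1 : 1 ≤ k) (hk2 : k ≤ c) :
    IsLozengeTiling (Reg a b c j k)
      {L | ∃ t ∈ Reg a b c j k,
        L = {t, pairFn b c ((a : ℤ) + b - j) ((a : ℤ) + b - 1) ((k : ℤ) - 1) t}} := by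
  set f := pairFn b c ((a : ℤ) + b - j) ((a : ℤ) + b - 1) ((k : ℤ) - 1) with hf
  have K := key a b c j k ha hc hj1 hj2 hk1 hk2
  refine ⟨?_, ?_, ?_⟩
  · rintro L ⟨t, ht, rfl⟩
    exact ⟨t, f t, (K t ht).2.2, rfl⟩
  · rintro L ⟨t, ht, rfl⟩ s hs
    rcases hs with rfl | hs
    · exact ht
    · rw [Set.mem_singleton_iff] at hs; subst hs; exact (K t ht).1
  · intro r hr
    refine ⟨{r, f r}, ⟨⟨r, hr, rfl⟩, Set.mem_insert _ _⟩, ?_⟩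
    rintro L ⟨⟨t, ht, rfl⟩, hrL⟩
    rcases hrL with rfl | hrL
    · rfl
    · rw [Set.mem_singleton_iff] at hrL; subst hrL
      rw [show f (f t) = t from (K t ht).2.1, Set.pair_comm]

lemma tilings_finite (a b c j k : ℕ) :
    {P : Set (Set Tri) | IsLozengeTiling (Reg a b c j k) P}.Finite := by
  apply Set.Finite.subset (Set.Finite.finite_subsets (Set.Finite.finite_subsets
    (reg_finite a b c j k)))
  intro P hP L hL
  exact hP.2.1 L hL

/-- The hexagon `H_{a,b,c}` with two dents of opposite orientation on adjacent sides of
lengths `a` and `c` (in positions `j` and `k` from the common vertex of the two sides: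
the up-pointing triangle `(a+b-j, 0)` on the southern side and the down-pointing triangle
`(a+b-1, k-1)` on the adjacent southeastern side) admits at least one lozenge tiling. -/
theorem adj_region_tileable (a b c j k : ℕ) (ha : 1 ≤ a) (hc : 1 ≤ c)
    (hj1 : 1 ≤ j) (hj2 : j ≤ a) (hk1 : 1 ≤ k) (hk2 : k ≤ c) :
    0 < M (Hex a b c \ {((a : ℤ) + b - j, 0, true), ((a : ℤ) + b - 1, (k : ℤ) - 1, false)}) := by
  have hfin : Finite {P : Set (Set Tri) // IsLozengeTiling (Reg a b c j k) P} :=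
    (tilings_finite a b c j k).to_subtype
  have hne : Nonempty {P : Set (Set Tri) // IsLozengeTiling (Reg a b c j k) P} :=
    ⟨_, tiling_exists a b c j k ha hc hj1 hj2 hk1 hk2⟩
  have h : 0 < Nat.card {P : Set (Set Tri) // IsLozengeTiling (Reg a b c j k) P} :=
    Nat.card_pos
  exact h
end

section
/- Let a, b, c be positive integers and let i, j be integers with 1 ≤ i, j ≤ a. Then the region obtained from the hexagon H_{a,b,c} by removing two dents of opposite orientation in positions i and j along the two opposite sides of length a (position i counted from the common vertex of its side with the adjacent side of length b, position j counted from the common vertex of its side with the adjacent side of length c) admits at least one lozenge tiling; that is, its number of lozenge tilings is positive. -/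
/-- Membership conditions for an up-triangle in the dented hexagon. -/
def CondU (a b c i : ℕ) (x y : ℤ) : Prop :=
  0 ≤ x ∧ x ≤ (a : ℤ) + b - 1 ∧ 0 ≤ y ∧ y ≤ (b : ℤ) + c - 1 ∧
    (b : ℤ) ≤ x + y ∧ x + y ≤ (a : ℤ) + b + c - 1 ∧ ¬(x = (b : ℤ) + i - 1 ∧ y = 0)

/-- Membership conditions for a down-triangle in the dented hexagon. -/
def CondD (a b c j : ℕ) (x y : ℤ) : Prop :=
  0 ≤ x ∧ x ≤ (a : ℤ) + b - 1 ∧ 0 ≤ y ∧ y ≤ (b : ℤ) + c - 1 ∧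
    (b : ℤ) - 1 ≤ x + y ∧ x + y ≤ (a : ℤ) + b + c - 2 ∧ ¬(x = (j : ℤ) - 1 ∧ y = (b : ℤ) + c - 1)

/-- Partner (down-triangle coordinates) of the up-triangle at `(x,y)` in an explicit tiling. -/
def tileF (a b i j : ℕ) (x y : ℤ) : ℤ × ℤ :=
  if (b : ℤ) + 1 ≤ y then (if (a : ℤ) ≤ x ∨ x = (j : ℤ) - 1 then (x, y - 1) else (x, y))
  else if y = (b : ℤ) then
    (if (a : ℤ) ≤ x then (x, y - 1)
     else if (j : ℤ) - 1 < (i : ℤ) then (if x = (j : ℤ) - 1 then (x, y - 1) else (x, y))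
     else if x = 0 then (x, y - 1)
     else if x ≤ (j : ℤ) - 1 then (x - 1, y) else (x, y))
  else if y = (b : ℤ) - 1 then
    (if (a : ℤ) + 1 ≤ x then (x, y - 1)
     else if x = (i : ℤ) then (x, y - 1)
     else if (j : ℤ) - 1 < (i : ℤ) then
       (if x ≤ (j : ℤ) - 1 then (x - 1, y) else if x ≤ (i : ℤ) - 1 then (x, y) else (x - 1, y))
     else if x ≤ (i : ℤ) - 1 then (x, y) else (x - 1, y))
  else (if x = (b : ℤ) + i - 1 - y ∨ (a : ℤ) + b - y ≤ x then (x, y - 1) else (x - 1, y))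

/-- Inverse: the up-triangle matched to the down-triangle at `(x,y)`. -/
def tileG (a b i j : ℕ) (x y : ℤ) : ℤ × ℤ :=
  if (b : ℤ) + 1 ≤ y then (if (a : ℤ) ≤ x ∨ x = (j : ℤ) - 1 then (x, y + 1) else (x, y))
  else if y = (b : ℤ) then
    (if (a : ℤ) ≤ x ∨ x = (j : ℤ) - 1 then (x, y + 1)
     else if (j : ℤ) - 1 < (i : ℤ) then (x, y)
     else if x ≤ (j : ℤ) - 2 then (x + 1, y) else (x, y))
  else if y = (b : ℤ) - 1 then
    (if (a : ℤ) ≤ x then (x, y + 1)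
     else if (j : ℤ) - 1 < (i : ℤ) then
       (if x = (j : ℤ) - 1 then (x, y + 1)
        else if x ≤ (j : ℤ) - 2 then (x + 1, y)
        else if x ≤ (i : ℤ) - 1 then (x, y) else (x + 1, y))
     else if x = 0 then (x, y + 1)
     else if x ≤ (i : ℤ) - 1 then (x, y) else (x + 1, y))
  else (if x = (b : ℤ) + i - 2 - y ∨ (a : ℤ) + b - 1 - y ≤ x then (x, y + 1) else (x + 1, y))

lemma tileF_shape (a b i j : ℕ) (x y x' y' : ℤ) (he : tileF a b i j x y = (x', y')) :
    (x' = x ∧ y' = y) ∨ (x' = x - 1 ∧ y' = y) ∨ (x' = x ∧ y' = y - 1) := by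
  unfold tileF at he
  split_ifs at he <;> (rw [Prod.mk.injEq] at he; omega)

lemma tileF_cond (a b c i j : ℕ) (ha : 1 ≤ a) (hb : 1 ≤ b) (hc : 1 ≤ c)
    (hi1 : 1 ≤ i) (hi2 : i ≤ a) (hj1 : 1 ≤ j) (hj2 : j ≤ a) (x y x' y' : ℤ)
    (hu : CondU a b c i x y) (he : tileF a b i j x y = (x', y')) : CondD a b c j x' y' := by
  unfold CondU at hu; unfold CondD
  unfold tileF at he
  split_ifs at he <;> (rw [Prod.mk.injEq] at he; omega)

set_option maxHeartbeats 2000000 in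
lemma tileG_spec (a b c i j : ℕ) (ha : 1 ≤ a) (hb : 1 ≤ b) (hc : 1 ≤ c)
    (hi1 : 1 ≤ i) (hi2 : i ≤ a) (hj1 : 1 ≤ j) (hj2 : j ≤ a) (x y x' y' : ℤ)
    (hd : CondD a b c j x y) (he : tileG a b i j x y = (x', y')) :
    CondU a b c i x' y' ∧ tileF a b i j x' y' = (x, y) := by
  unfold CondD at hd
  constructor
  · unfold CondU
    unfold tileG at he
    split_ifs at he <;> (rw [Prod.mk.injEq] at he; omega)
  · unfold tileG at he
    split_ifs at he <;> rw [Prod.mk.injEq] at he <;>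
      (unfold tileF; split_ifs <;> (rw [Prod.mk.injEq]; omega))

set_option maxHeartbeats 2000000 in
lemma tileF_ginv (a b c i j : ℕ) (ha : 1 ≤ a) (hb : 1 ≤ b) (hc : 1 ≤ c)
    (hi1 : 1 ≤ i) (hi2 : i ≤ a) (hj1 : 1 ≤ j) (hj2 : j ≤ a) (x y x' y' : ℤ)
    (hu : CondU a b c i x y) (he : tileF a b i j x y = (x', y')) :
    tileG a b i j x' y' = (x, y) := by
  unfold CondU at hu
  unfold tileF at he
  split_ifs at he <;> rw [Prod.mk.injEq] at he <;>
    (unfold tileG; split_ifs <;> (rw [Prod.mk.injEq]; omega))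

lemma memU (a b c i j : ℕ) (x y : ℤ) :
    ((x, y, true) : Tri) ∈
      Hex a b c \ {((b : ℤ) + i - 1, 0, true), ((j : ℤ) - 1, (b : ℤ) + c - 1, false)} ↔
    CondU a b c i x y := by
  simp [Hex, HexK, CondU, Prod.ext_iff]
  omega

lemma memD (a b c i j : ℕ) (x y : ℤ) :
    ((x, y, false) : Tri) ∈
      Hex a b c \ {((b : ℤ) + i - 1, 0, true), ((j : ℤ) - 1, (b : ℤ) + c - 1, false)} ↔
    CondD a b c j x y := by
  simp [Hex, HexK, CondD, Prod.ext_iff]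
  omega

/-- The hexagon `H_{a,b,c}` with two dents of opposite orientation in positions `i` and `j`
along the two opposite sides of length `a` (position `i` counted from the common vertex of
its side with the adjacent side of length `b`, position `j` from the common vertex of its
side with the adjacent side of length `c`: the up-pointing triangle `(b+i-1, 0)` on the
southern side and the down-pointing triangle `(j-1, b+c-1)` on the northern side) admits
at least one lozenge tiling. -/
theorem opp_region_tileable (a b c i j : ℕ) (ha : 1 ≤ a) (hb : 1 ≤ b) (hc : 1 ≤ c)
    (hi1 : 1 ≤ i) (hi2 : i ≤ a) (hj1 : 1 ≤ j) (hj2 : j ≤ a) :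
    0 < M (Hex a b c \ {((b : ℤ) + i - 1, 0, true), ((j : ℤ) - 1, (b : ℤ) + c - 1, false)}) := by
  classical
  set Rg : Set Tri :=
    Hex a b c \ {((b : ℤ) + i - 1, 0, true), ((j : ℤ) - 1, (b : ℤ) + c - 1, false)} with hRg
  set P : Set (Set Tri) :=
    {L | ∃ x y x' y' : ℤ, CondU a b c i x y ∧ tileF a b i j x y = (x', y') ∧
         L = {(x, y, true), (x', y', false)}} with hP
  have key : IsLozengeTiling Rg P := by
    refine ⟨?_, ?_, ?_⟩
    · rintro L ⟨x, y, x', y', hu, hF, rfl⟩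
      refine ⟨(x, y, true), (x', y', false), ?_, rfl⟩
      rcases tileF_shape a b i j x y x' y' hF with ⟨h1, h2⟩ | ⟨h1, h2⟩ | ⟨h1, h2⟩
      · exact ⟨x, y, Or.inl (by rw [h1, h2])⟩
      · exact ⟨x, y, Or.inr (Or.inl (by rw [h1, h2]))⟩
      · exact ⟨x, y, Or.inr (Or.inr (by rw [h1, h2]))⟩
    · rintro L ⟨x, y, x', y', hu, hF, rfl⟩ r hr
      rcases hr with rfl | hr
      · exact (memU a b c i j x y).mpr hu
      · rw [Set.mem_singleton_iff] at hr
        subst hr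
        exact (memD a b c i j x' y').mpr
          (tileF_cond a b c i j ha hb hc hi1 hi2 hj1 hj2 x y x' y' hu hF)
    · rintro ⟨x, y, e⟩ hr
      cases e
      · -- down-triangle
        have hd := (memD a b c i j x y).mp hr
        rcases hg : tileG a b i j x y with ⟨u, v⟩
        obtain ⟨hu, hFu⟩ := tileG_spec a b c i j ha hb hc hi1 hi2 hj1 hj2 x y u v hd hg
        refine ⟨{(u, v, true), (x, y, false)},
          ⟨⟨u, v, x, y, hu, hFu, rfl⟩, Or.inr rfl⟩, ?_⟩
        rintro L ⟨⟨x₁, y₁, x₁', y₁', hu₁, hF₁, rfl⟩, hmem⟩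
        rcases hmem with h | h
        · exact absurd congr(($h).2.2) (by simp)
        · rw [Set.mem_singleton_iff, Prod.ext_iff, Prod.ext_iff] at h
          obtain ⟨h1, h2, -⟩ := h
          dsimp at h1 h2
          subst h1; subst h2
          have := tileF_ginv a b c i j ha hb hc hi1 hi2 hj1 hj2 x₁ y₁ x y hu₁ hF₁
          rw [hg, Prod.mk.injEq] at this
          obtain ⟨rfl, rfl⟩ := this
          rfl
      · -- up-triangle
        have hu := (memU a b c i j x y).mp hr
        rcases hxy : tileF a b i j x y with ⟨x', y'⟩
        refine ⟨{(x, y, true), (x', y', false)},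
          ⟨⟨x, y, x', y', hu, hxy, rfl⟩, Or.inl rfl⟩, ?_⟩
        rintro L ⟨⟨x₁, y₁, x₁', y₁', hu₁, hF₁, rfl⟩, hmem⟩
        rcases hmem with h | h
        · rw [Prod.ext_iff, Prod.ext_iff] at h
          obtain ⟨h1, h2, -⟩ := h
          dsimp at h1 h2
          subst h1; subst h2
          rw [hxy, Prod.mk.injEq] at hF₁
          obtain ⟨rfl, rfl⟩ := hF₁
          rfl
        · exact absurd congr(($h).2.2) (by simp)
  have hHexFin : (Hex a b c).Finite := by
    apply Set.Finite.subset
      (((Set.finite_Icc (0 : ℤ) ((a : ℤ) + b)).prod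
        ((Set.finite_Icc (0 : ℤ) ((b : ℤ) + c)).prod (Set.finite_univ))))
    rintro ⟨x, y, e⟩ h
    simp only [Hex, HexK, Set.mem_setOf_eq] at h
    simp only [Set.mem_prod, Set.mem_Icc, Set.mem_univ, and_true]
    cases e <;> simp only [Bool.false_eq_true, if_false, if_true] at h <;> omega
  have hRfin : Rg.Finite := hHexFin.subset Set.diff_subset
  have hTfin : {Q : Set (Set Tri) | IsLozengeTiling Rg Q}.Finite := by
    apply Set.Finite.subset hRfin.finite_subsets.finite_subsets
    intro Q hQ
    exact fun L hL => hQ.2.1 L hL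
  haveI : Finite {Q : Set (Set Tri) // IsLozengeTiling Rg Q} := hTfin.to_subtype
  haveI : Nonempty {Q : Set (Set Tri) // IsLozengeTiling Rg Q} := ⟨⟨P, key⟩⟩
  exact Nat.card_pos
end
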